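/- Let f(t,u) = (t³+3u, t⁴+4tu, t⁵+5t²u) be the tangential developable of the curve t ↦ (t³, t⁴, t⁵), with unit normal ν(t,u) = (−10t², 15t, −6)/√(100t⁴+225t²+36). Then (f, ν) is a frontal, its signed area density is λ = det(f_t, f_u, ν) = 2u·√(100t⁴+225t²+36), so the singular set is {u = 0}; the origin is a non-degenerate singular point (dλ_{(0,0)} ≠ 0), the vector field η(t) = (1, −t²) is a null vector field along the singular curve γ(t) = (t, 0) (i.e. df_{(t,0)}(1, −t²) = 0 for all t), and the origin is neither an A₂-point nor an A₃-point: det(γ̇(t), η(t)) = −t² vanishes at t = 0 together with its first derivative. -/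

import Mathlib

noncomputable section

/-- Euclidean dot product on ℝ³. -/
def dot3 (a b : Fin 3 → ℝ) : ℝ := a 0 * b 0 + a 1 * b 1 + a 2 * b 2

/-- Euclidean norm on ℝ³. -/
def norm3 (a : Fin 3 → ℝ) : ℝ := Real.sqrt (a 0 ^ 2 + a 1 ^ 2 + a 2 ^ 2)

/-- Determinant of three vectors in ℝ³ (as rows). -/
def det3 (a b c : Fin 3 → ℝ) : ℝ := Matrix.det (Matrix.of ![a, b, c])

/-- Determinant of two vectors in ℝ² (as rows of a 2×2 matrix). -/
def det2 (a b : ℝ × ℝ) : ℝ := Matrix.det !![a.1, a.2; b.1, b.2]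

/-- The tangential developable `f(t,u) = (t³+3u, t⁴+4tu, t⁵+5t²u)` of the curve
`t ↦ (t³, t⁴, t⁵)`; coordinates are `(t,u) = (p.1, p.2)`. -/
def fTD : ℝ × ℝ → Fin 3 → ℝ :=
  fun p => ![p.1 ^ 3 + 3 * p.2, p.1 ^ 4 + 4 * p.1 * p.2, p.1 ^ 5 + 5 * p.1 ^ 2 * p.2]

/-- The unit normal `ν(t,u) = (−10t², 15t, −6)/√(100t⁴+225t²+36)`. -/
def nuTD : ℝ × ℝ → Fin 3 → ℝ :=
  fun p => (Real.sqrt (100 * p.1 ^ 4 + 225 * p.1 ^ 2 + 36))⁻¹ •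
    ![-10 * p.1 ^ 2, 15 * p.1, -6]

/-- The signed area density `λ = det(f_t, f_u, ν)` of the tangential developable. -/
def lamTD : ℝ × ℝ → ℝ :=
  fun p => det3 (fderiv ℝ fTD p (1, 0)) (fderiv ℝ fTD p (0, 1)) (nuTD p)

/-! ### Auxiliary lemmas -/

/-- The linear map `v ↦ a v₁ + b v₂`. -/
def Dmap (a b : ℝ) : ℝ × ℝ →L[ℝ] ℝ :=
  a • ContinuousLinearMap.fst ℝ ℝ ℝ + b • ContinuousLinearMap.snd ℝ ℝ ℝ

@[simp] lemma Dmap_apply (a b : ℝ) (v : ℝ × ℝ) : Dmap a b v = a * v.1 + b * v.2 := by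
  simp [Dmap]

lemma hasFDerivAt_fTD (p : ℝ × ℝ) :
    HasFDerivAt fTD (ContinuousLinearMap.pi
      ![Dmap (3 * p.1 ^ 2) 3, Dmap (4 * p.1 ^ 3 + 4 * p.2) (4 * p.1),
        Dmap (5 * p.1 ^ 4 + 10 * p.1 * p.2) (5 * p.1 ^ 2)]) p := by
  have h1 : HasFDerivAt (fun q : ℝ × ℝ => q.1) (ContinuousLinearMap.fst ℝ ℝ ℝ) p :=
    hasFDerivAt_fst
  have h2 : HasFDerivAt (fun q : ℝ × ℝ => q.2) (ContinuousLinearMap.snd ℝ ℝ ℝ) p :=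
    hasFDerivAt_snd
  apply hasFDerivAt_pi.mpr
  intro i
  fin_cases i
  · show HasFDerivAt (fun q : ℝ × ℝ => q.1 ^ 3 + 3 * q.2) (Dmap (3 * p.1 ^ 2) 3) p
    have e : (fun q : ℝ × ℝ => q.1 ^ 3 + 3 * q.2) =
        fun q : ℝ × ℝ => q.1 * q.1 * q.1 + 3 * q.2 := by funext q; ring
    rw [e]
    have h := ((h1.mul h1).mul h1).add (h2.const_mul 3)
    refine h.congr_fderiv ?_
    ext v
    · simp [Dmap]; ring
    · simp [Dmap]
  · show HasFDerivAt (fun q : ℝ × ℝ => q.1 ^ 4 + 4 * q.1 * q.2)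
      (Dmap (4 * p.1 ^ 3 + 4 * p.2) (4 * p.1)) p
    have e : (fun q : ℝ × ℝ => q.1 ^ 4 + 4 * q.1 * q.2) =
        fun q : ℝ × ℝ => q.1 * q.1 * q.1 * q.1 + 4 * (q.1 * q.2) := by funext q; ring
    rw [e]
    have h := (((h1.mul h1).mul h1).mul h1).add ((h1.mul h2).const_mul 4)
    refine h.congr_fderiv ?_
    ext v
    · simp [Dmap]; ring
    · simp [Dmap]
  · show HasFDerivAt (fun q : ℝ × ℝ => q.1 ^ 5 + 5 * q.1 ^ 2 * q.2)
      (Dmap (5 * p.1 ^ 4 + 10 * p.1 * p.2) (5 * p.1 ^ 2)) p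
    have e : (fun q : ℝ × ℝ => q.1 ^ 5 + 5 * q.1 ^ 2 * q.2) =
        fun q : ℝ × ℝ => q.1 * q.1 * q.1 * q.1 * q.1 + 5 * (q.1 * q.1 * q.2) := by
      funext q; ring
    rw [e]
    have h := ((((h1.mul h1).mul h1).mul h1).mul h1).add
      (((h1.mul h1).mul h2).const_mul 5)
    refine h.congr_fderiv ?_
    ext v
    · simp [Dmap]; ring
    · simp [Dmap]; ring

lemma fderiv_fTD_apply (p v : ℝ × ℝ) :
    fderiv ℝ fTD p v = ![3 * p.1 ^ 2 * v.1 + 3 * v.2,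
      (4 * p.1 ^ 3 + 4 * p.2) * v.1 + 4 * p.1 * v.2,
      (5 * p.1 ^ 4 + 10 * p.1 * p.2) * v.1 + 5 * p.1 ^ 2 * v.2] := by
  rw [(hasFDerivAt_fTD p).fderiv]
  funext i
  fin_cases i <;> simp [ContinuousLinearMap.pi_apply]

lemma sqrt_pos' (t : ℝ) : 0 < Real.sqrt (100 * t ^ 4 + 225 * t ^ 2 + 36) := by
  apply Real.sqrt_pos.mpr; positivity

lemma sq_sqrt' (t : ℝ) :
    Real.sqrt (100 * t ^ 4 + 225 * t ^ 2 + 36) * Real.sqrt (100 * t ^ 4 + 225 * t ^ 2 + 36)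
      = 100 * t ^ 4 + 225 * t ^ 2 + 36 := by
  apply Real.mul_self_sqrt; positivity

lemma lamTD_eq (p : ℝ × ℝ) :
    lamTD p = 2 * p.2 * Real.sqrt (100 * p.1 ^ 4 + 225 * p.1 ^ 2 + 36) := by
  have hc := sqrt_pos' p.1
  set c := Real.sqrt (100 * p.1 ^ 4 + 225 * p.1 ^ 2 + 36) with hcdef
  have hcc : c * c = 100 * p.1 ^ 4 + 225 * p.1 ^ 2 + 36 := sq_sqrt' p.1
  simp only [lamTD, det3, nuTD, fderiv_fTD_apply]
  rw [Matrix.det_fin_three]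
  simp only [Matrix.of_apply, Matrix.cons_val', Matrix.cons_val_zero, Matrix.cons_val_one,
    Matrix.head_cons, Matrix.empty_val', Matrix.cons_val_fin_one, Matrix.cons_val_two,
    Matrix.tail_cons, Matrix.smul_cons, Matrix.smul_empty, smul_eq_mul, Matrix.vecHead]
  calc _ = c⁻¹ * (2 * p.2 * (100 * p.1 ^ 4 + 225 * p.1 ^ 2 + 36)) := by ring
    _ = c⁻¹ * (2 * p.2 * (c * c)) := by rw [hcc]
    _ = 2 * p.2 * c := by
        field_simp

lemma norm3_nuTD (p : ℝ × ℝ) : norm3 (nuTD p) = 1 := by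
  have hc := sqrt_pos' p.1
  set c := Real.sqrt (100 * p.1 ^ 4 + 225 * p.1 ^ 2 + 36) with hcdef
  have hcc := sq_sqrt' p.1
  rw [← hcdef] at hcc
  have key : nuTD p 0 ^ 2 + nuTD p 1 ^ 2 + nuTD p 2 ^ 2 = 1 := by
    simp only [nuTD, Matrix.smul_cons, Matrix.smul_empty, smul_eq_mul,
      Matrix.cons_val_zero, Matrix.cons_val_one, Matrix.head_cons, Matrix.cons_val_two,
      Matrix.tail_cons, ← hcdef]
    calc _ = c⁻¹ * c⁻¹ * (100 * p.1 ^ 4 + 225 * p.1 ^ 2 + 36) := by ring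
      _ = c⁻¹ * c⁻¹ * (c * c) := by rw [hcc]
      _ = 1 := by field_simp
  rw [norm3, key, Real.sqrt_one]

lemma sqrt_diff (p : ℝ × ℝ) :
    DifferentiableAt ℝ (fun q : ℝ × ℝ =>
      Real.sqrt (100 * q.1 ^ 4 + 225 * q.1 ^ 2 + 36)) p := by
  have hq : DifferentiableAt ℝ (fun q : ℝ × ℝ => 100 * q.1 ^ 4 + 225 * q.1 ^ 2 + 36) p := by
    fun_prop
  have hne : 100 * p.1 ^ 4 + 225 * p.1 ^ 2 + 36 ≠ 0 := by positivity
  exact hq.sqrt hne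

lemma fderiv_lam_ne (h : lamTD = fun p : ℝ × ℝ =>
    2 * p.2 * Real.sqrt (100 * p.1 ^ 4 + 225 * p.1 ^ 2 + 36)) :
    fderiv ℝ lamTD (0, 0) ≠ 0 := by
  set s : ℝ × ℝ → ℝ := fun q => Real.sqrt (100 * q.1 ^ 4 + 225 * q.1 ^ 2 + 36) with hs
  have hsF : HasFDerivAt s (fderiv ℝ s (0, 0)) ((0 : ℝ), (0 : ℝ)) :=
    (sqrt_diff (0, 0)).hasFDerivAt
  have hu : HasFDerivAt (fun p : ℝ × ℝ => 2 * p.2)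
      ((2 : ℝ) • ContinuousLinearMap.snd ℝ ℝ ℝ) ((0 : ℝ), (0 : ℝ)) :=
    (hasFDerivAt_snd).const_mul 2
  have hmul := hu.mul hsF
  have hval : s ((0 : ℝ), (0 : ℝ)) = 6 := by
    simp [hs]
    rw [show (36 : ℝ) = 6 ^ 2 by norm_num, Real.sqrt_sq (by norm_num)]
  have hl : HasFDerivAt lamTD
      ((2 * ((0 : ℝ), (0 : ℝ)).2) • fderiv ℝ s (0, 0) +
        s ((0 : ℝ), (0 : ℝ)) • ((2 : ℝ) • ContinuousLinearMap.snd ℝ ℝ ℝ)) ((0 : ℝ), (0 : ℝ)) := by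
    rw [h]; exact hmul
  intro hzero
  have h12 : fderiv ℝ lamTD (0, 0) (0, 1) = 12 := by
    rw [hl.fderiv]
    have hval' : s (0 : ℝ × ℝ) = 6 := hval
    simp [hval']
    norm_num
  rw [hzero] at h12
  simp at h12

lemma deriv_gamma (t : ℝ) : deriv (fun s : ℝ => (s, (0 : ℝ))) t = (1, 0) :=
  ((hasDerivAt_id t).prodMk (hasDerivAt_const t 0)).deriv

lemma det2_eq (t : ℝ) : det2 (deriv (fun s : ℝ => (s, (0 : ℝ))) t) (1, -t ^ 2) = -t ^ 2 := by
  rw [deriv_gamma]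
  simp [det2, Matrix.det_fin_two_of]

/-- `(f, ν)` is a frontal; `λ = 2u·√(100t⁴+225t²+36)`, so the singular set is
`{u = 0}`; the origin is a non-degenerate singular point; `η(t) = (1, −t²)` is a
null vector field along the singular curve `γ(t) = (t,0)`; and the origin is
neither an A₂- nor an A₃-point: `det(γ̇(t), η(t)) = −t²` vanishes at `t = 0`
together with its first derivative. -/
theorem tangential_developable_not_A2_A3 :
    (∀ p : ℝ × ℝ, norm3 (nuTD p) = 1) ∧
    (∀ p : ℝ × ℝ, dot3 (nuTD p) (fderiv ℝ fTD p (1, 0)) = 0 ∧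
      dot3 (nuTD p) (fderiv ℝ fTD p (0, 1)) = 0) ∧
    (∀ p : ℝ × ℝ, lamTD p = 2 * p.2 * Real.sqrt (100 * p.1 ^ 4 + 225 * p.1 ^ 2 + 36)) ∧
    ({p : ℝ × ℝ | lamTD p = 0} = {p : ℝ × ℝ | p.2 = 0}) ∧
    fderiv ℝ lamTD (0, 0) ≠ 0 ∧
    (∀ t : ℝ, fderiv ℝ fTD (t, 0) (1, -t ^ 2) = 0) ∧
    (∀ t : ℝ, det2 (deriv (fun s : ℝ => (s, (0 : ℝ))) t) (1, -t ^ 2) = -t ^ 2) ∧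
    det2 (deriv (fun s : ℝ => (s, (0 : ℝ))) 0) (1, -(0 : ℝ) ^ 2) = 0 ∧
    deriv (fun t : ℝ => det2 (deriv (fun s : ℝ => (s, (0 : ℝ))) t) (1, -t ^ 2)) 0 = 0 := by
  refine ⟨norm3_nuTD, ?_, lamTD_eq, ?_, fderiv_lam_ne (funext lamTD_eq), ?_, det2_eq, ?_, ?_⟩
  · intro p
    constructor <;>
    · simp only [dot3, nuTD, fderiv_fTD_apply, Matrix.smul_cons, Matrix.smul_empty,
        smul_eq_mul, Matrix.cons_val_zero, Matrix.cons_val_one, Matrix.head_cons,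
        Matrix.cons_val_two, Matrix.tail_cons]
      ring
  · ext p
    simp only [Set.mem_setOf_eq, lamTD_eq]
    constructor
    · intro h
      rcases mul_eq_zero.mp h with h1 | h2
      · rcases mul_eq_zero.mp h1 with h3 | h4
        · norm_num at h3
        · exact h4
      · exact absurd h2 (sqrt_pos' p.1).ne'
    · intro h; rw [h]; ring
  · intro t
    funext i
    rw [fderiv_fTD_apply]
    fin_cases i <;> simp <;> ring
  · simpa using det2_eq 0
  · have e : (fun t : ℝ => det2 (deriv (fun s : ℝ => (s, (0 : ℝ))) t) (1, -t ^ 2)) =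
        fun t : ℝ => -t ^ 2 := funext det2_eq
    rw [e]
    have h : HasDerivAt (fun t : ℝ => -t ^ 2) 0 0 := by
      simpa using (hasDerivAt_pow 2 (0 : ℝ)).fun_neg
    exact h.deriv
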